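/- With G symmetric positive definite and B skew-symmetric, the generalized metric H(G,B) = [[G − B G⁻¹ B, B G⁻¹],[−G⁻¹ B, G⁻¹]] is symmetric and positive definite. -/

import Mathlib

/-!
`H(G,B)` is the `B`-transform of the block diagonal `diag(G, G⁻¹)`: with the unitriangular
`U = [[1, B], [0, 1]]`, skew-symmetry of `B` makes `Uᵀ = [[1, 0], [-B, 1]]`, and
`H(G,B) = U diag(G, G⁻¹) Uᵀ`. Congruence by an invertible matrix preserves positive
definiteness, and `diag(G, G⁻¹)` is positive definite because `G` and `G⁻¹` are.
-/

open Matrix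

namespace Matrix

variable {m n R : Type*} [Fintype m] [Fintype n]

theorem fromBlocks_unitriangular_mul_diag_mul_unitriangular [DecidableEq m] [DecidableEq n]
    [Ring R] (A : Matrix m m R) (B : Matrix m n R) (C : Matrix n m R) (D : Matrix n n R) :
    fromBlocks 1 B 0 1 * fromBlocks A 0 0 D * fromBlocks 1 0 C 1 =
      fromBlocks (A + B * D * C) (B * D) (D * C) D := by
  simp [fromBlocks_multiply, Matrix.mul_assoc]

theorem PosDef.fromBlocks_zero [Ring R] [PartialOrder R] [StarRing R] [IsOrderedAddMonoid R]
    {A : Matrix m m R} {D : Matrix n n R} (hA : A.PosDef) (hD : D.PosDef) :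
    (fromBlocks A 0 0 D).PosDef := by
  refine .of_dotProduct_mulVec_pos (hA.1.fromBlocks (by simp) hD.1) fun x hx => ?_
  have hsplit : star x ⬝ᵥ fromBlocks A 0 0 D *ᵥ x =
      star (x ∘ Sum.inl) ⬝ᵥ A *ᵥ (x ∘ Sum.inl) + star (x ∘ Sum.inr) ⬝ᵥ D *ᵥ (x ∘ Sum.inr) := by
    simp only [fromBlocks_mulVec, zero_mulVec, add_zero, zero_add, dotProduct_block,
      Sum.elim_comp_inl, Sum.elim_comp_inr]
    rfl
  rw [hsplit]
  by_cases hl : x ∘ Sum.inl = 0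
  · have hr : x ∘ Sum.inr ≠ 0 := fun hr =>
      hx (by rw [← Sum.elim_comp_inl_inr x, hl, hr, Sum.elim_zero_zero])
    exact add_pos_of_nonneg_of_pos (hA.posSemidef.dotProduct_mulVec_nonneg _)
      (hD.dotProduct_mulVec_pos hr)
  · exact add_pos_of_pos_of_nonneg (hA.dotProduct_mulVec_pos hl)
      (hD.posSemidef.dotProduct_mulVec_nonneg _)

end Matrix

/-- the generalized metric `H(G,B)` is symmetric positive definite. -/
theorem stmt8 (d : ℕ) (G B : Matrix (Fin d) (Fin d) ℝ)
    (hG : G.PosDef) (hB : Bᵀ = -B) :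
    (fromBlocks (G - B * G⁻¹ * B) (B * G⁻¹) (-(G⁻¹ * B)) G⁻¹ :
      Matrix (Fin d ⊕ Fin d) (Fin d ⊕ Fin d) ℝ).PosDef := by
  set U : Matrix (Fin d ⊕ Fin d) (Fin d ⊕ Fin d) ℝ := fromBlocks 1 B 0 1
  have hU : IsUnit U := isUnit_fromBlocks_zero₂₁.mpr ⟨isUnit_one, isUnit_one⟩
  have hUstar : star U = fromBlocks 1 0 (-B) 1 := by
    rw [star_eq_conjTranspose, fromBlocks_conjTranspose,
      conjTranspose_eq_transpose_of_trivial B, hB]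
    simp
  have hfactor : fromBlocks (G - B * G⁻¹ * B) (B * G⁻¹) (-(G⁻¹ * B)) G⁻¹ =
      U * fromBlocks G 0 0 G⁻¹ * star U := by
    rw [hUstar, fromBlocks_unitriangular_mul_diag_mul_unitriangular]
    simp [sub_eq_add_neg]
  rw [hfactor, hU.posDef_star_right_conjugate_iff]
  exact hG.fromBlocks_zero hG.inv
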